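/- arXiv:2204.01853 — 11 statements merged into one kernel-verified Lean document; each statement's English description precedes it below -/
import Mathlib

section
/- Let (L,[·,·,·];θ) be a Lie triple system with a representation (V,θ), let T: V → L be a linear map, and define T̂ ∈ End(L ⊕ V) by T̂(x, u) = (T(u), 0). Then T is an O-operator if and only if T̂ is a Rota-Baxter operator of weight 0 on the semidirect product Lie triple system L ⊕ V. -/
variable {F L V : Type*} [Field F] [CharZero F]
  [AddCommGroup L] [Module F L] [AddCommGroup V] [Module F V]

/-- `D(x,y) := θ(y,x) − θ(x,y)`. -/
def Dmap (θ : L →ₗ[F] L →ₗ[F] Module.End F V) (x y : L) : Module.End F V :=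
  θ y x - θ x y

/-- The axioms of a Lie triple system bracket. -/
def IsLTS (b : L →ₗ[F] L →ₗ[F] L →ₗ[F] L) : Prop :=
  (∀ x z, b x x z = 0) ∧
  (∀ x y z, b x y z + b y z x + b z x y = 0) ∧
  (∀ x y z t e, b x y (b z t e) = b (b x y z) t e + b z (b x y t) e + b z t (b x y e))

/-- The axioms of a representation of a Lie triple system on `V`. -/
def IsLTSRep (b : L →ₗ[F] L →ₗ[F] L →ₗ[F] L)
    (θ : L →ₗ[F] L →ₗ[F] Module.End F V) : Prop :=
  (∀ x y z t, θ z t * θ x y - θ y t * θ x z - θ x (b y z t) + Dmap θ y z * θ x t = 0) ∧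
  (∀ x y z t, θ z t * Dmap θ x y - Dmap θ x y * θ z t + θ (b x y z) t + θ z (b x y t) = 0)

/-- `T : V → L` is an `𝒪`-operator on the L.t.s `(L, b; θ)`. -/
def IsOOp (b : L →ₗ[F] L →ₗ[F] L →ₗ[F] L)
    (θ : L →ₗ[F] L →ₗ[F] Module.End F V) (T : V →ₗ[F] L) : Prop :=
  ∀ u v w, b (T u) (T v) (T w)
    = T (Dmap θ (T u) (T v) w + θ (T v) (T w) u - θ (T u) (T w) v)

/-- The semidirect product bracket on `L × V`. -/
def sd (b : L →ₗ[F] L →ₗ[F] L →ₗ[F] L)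
    (θ : L →ₗ[F] L →ₗ[F] Module.End F V) (p q r : L × V) : L × V :=
  (b p.1 q.1 r.1, θ q.1 r.1 p.2 - θ p.1 r.1 q.2 + Dmap θ p.1 q.1 r.2)

/-- The lift `T̂ : L ⊕ V → L ⊕ V`, `T̂(x, u) = (T u, 0)`. -/
def hatT (T : V →ₗ[F] L) (p : L × V) : L × V := (T p.2, 0)

/-!
On elements of the form `T̂ p = (T p.2, 0)` the semidirect product bracket is just the bracket
of `L`, while each of the three mixed brackets on the right-hand side of the Rota–Baxter identity
has exactly one surviving `V`-component, namely one of the three terms of the `𝒪`-operator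
identity. So the Rota–Baxter identity for `T̂` at `(p, q, r)` is the `𝒪`-operator identity for `T`
at `(p.2, q.2, r.2)`.
-/

section HatT

variable {F L V : Type*} [Field F] [AddCommGroup L] [Module F L] [AddCommGroup V] [Module F V]
  (b : L →ₗ[F] L →ₗ[F] L →ₗ[F] L) (θ : L →ₗ[F] L →ₗ[F] Module.End F V) (T : V →ₗ[F] L)

theorem sd_hatT_hatT_hatT (p q r : L × V) :
    sd b θ (hatT T p) (hatT T q) (hatT T r) = (b (T p.2) (T q.2) (T r.2), 0) := by
  simp [sd, hatT]

theorem hatT_sd_rotaBaxter_sum (p q r : L × V) :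
    hatT T (sd b θ (hatT T p) (hatT T q) r + sd b θ (hatT T p) q (hatT T r)
        + sd b θ p (hatT T q) (hatT T r)) =
      (T (Dmap θ (T p.2) (T q.2) r.2 + θ (T q.2) (T r.2) p.2 - θ (T p.2) (T r.2) q.2), 0) := by
  simp only [sd, hatT, Prod.snd_add, map_zero, zero_sub, sub_zero, zero_add,
    add_zero]
  congr 2
  abel

theorem hatT_rotaBaxter_iff (p q r : L × V) :
    sd b θ (hatT T p) (hatT T q) (hatT T r) =
        hatT T (sd b θ (hatT T p) (hatT T q) r + sd b θ (hatT T p) q (hatT T r)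
          + sd b θ p (hatT T q) (hatT T r)) ↔
      b (T p.2) (T q.2) (T r.2) =
        T (Dmap θ (T p.2) (T q.2) r.2 + θ (T q.2) (T r.2) p.2 - θ (T p.2) (T r.2) q.2) := by
  rw [sd_hatT_hatT_hatT, hatT_sd_rotaBaxter_sum, Prod.mk.injEq]
  exact and_iff_left rfl

end HatT

theorem oOp_iff_hat_rotaBaxter_general
    (b : L →ₗ[F] L →ₗ[F] L →ₗ[F] L)
    (θ : L →ₗ[F] L →ₗ[F] Module.End F V)
    (T : V →ₗ[F] L) :
    IsOOp b θ T ↔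
      ∀ p q r : L × V,
        sd b θ (hatT T p) (hatT T q) (hatT T r) =
          hatT T (sd b θ (hatT T p) (hatT T q) r + sd b θ (hatT T p) q (hatT T r)
            + sd b θ p (hatT T q) (hatT T r)) :=
  ⟨fun h p q r => (hatT_rotaBaxter_iff b θ T p q r).2 (h p.2 q.2 r.2),
    fun h u v w => (hatT_rotaBaxter_iff b θ T (0, u) (0, v) (0, w)).1 (h _ _ _)⟩

/-- `T` is an `𝒪`-operator iff `T̂` is a Rota-Baxter operator of weight `0`
on the semidirect product Lie triple system `L ⊕ V`. -/
theorem oOp_iff_hat_rotaBaxter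
    (b : L →ₗ[F] L →ₗ[F] L →ₗ[F] L) (hb : IsLTS b)
    (θ : L →ₗ[F] L →ₗ[F] Module.End F V) (hθ : IsLTSRep b θ)
    (T : V →ₗ[F] L) :
    IsOOp b θ T ↔
      ∀ p q r : L × V,
        sd b θ (hatT T p) (hatT T q) (hatT T r) =
          hatT T (sd b θ (hatT T p) (hatT T q) r + sd b θ (hatT T p) q (hatT T r)
            + sd b θ p (hatT T q) (hatT T r)) :=
  oOp_iff_hat_rotaBaxter_general b θ T
end

section
/- Let N be a Nijenhuis operator on a Lie triple system (L,[·,·,·]). Then the deformed bracket [x,y,z]_N := [Nx,Ny,z] + [x,Ny,Nz] + [Nx,y,Nz] − N([Nx,y,z] + [x,Ny,z] + [x,y,Nz] − N[x,y,z]) makes (L,[·,·,·]_N) a Lie triple system, and N is a homomorphism of Lie triple systems from (L,[·,·,·]_N) to (L,[·,·,·]), i.e. N([x,y,z]_N) = [Nx,Ny,Nz]. -/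
/-!
For a scalar `l` put `[x,y,z]_l = [x,y,z] + l [x,y,z]₁ + l² [x,y,z]_N`, where
`[x,y,z]₁ = [Nx,y,z] + [x,Ny,z] + [x,y,Nz] - N[x,y,z]`. The Nijenhuis condition says exactly that
`1 + l N` is a homomorphism from `[·,·,·]_l` to `[·,·,·]`, so it sends every defect of the
Lie triple system axioms for `[·,·,·]_l` to the corresponding defect for `[·,·,·]`, which is `0`.
Such a defect is a polynomial `∑ lⁱ qᵢ` in `l` whose top coefficient is the defect for
`[·,·,·]_N`. Over an infinite field, `(1 + l N) (∑ lⁱ qᵢ) = 0` for all `l` means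
`q₀ = 0` and `qᵢ₊₁ = -N qᵢ`, so all coefficients vanish.
-/

variable {F L V : Type*} [Field F] [CharZero F]
  [AddCommGroup L] [Module F L] [AddCommGroup V] [Module F V]

/-- The bracket deformed by a Nijenhuis operator `N`. -/
def nijBracket (b : L →ₗ[F] L →ₗ[F] L →ₗ[F] L) (N : L →ₗ[F] L) (x y z : L) : L :=
  b (N x) (N y) z + b x (N y) (N z) + b (N x) y (N z)
    - N (b (N x) y z + b x (N y) z + b x y (N z) - N (b x y z))

section VanishingPolynomial

variable {K M : Type*} [Field K] [Infinite K] [AddCommGroup M] [Module K M]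

theorem eq_zero_of_forall_sum_pow_smul_eq_zero {n : ℕ} {q : Fin n → M}
    (h : ∀ l : K, ∑ i : Fin n, l ^ (i : ℕ) • q i = 0) : q = 0 := by
  funext i
  refine (Module.forall_dual_apply_eq_zero_iff K (q i)).1 fun φ => ?_
  have hp : ∑ j : Fin n, Polynomial.monomial (j : ℕ) (φ (q j)) = 0 :=
    Polynomial.funext fun l => by
      simpa [Polynomial.eval_finsetSum, mul_comm] using congrArg φ (h l)
  simpa [Polynomial.finsetSum_coeff, Polynomial.coeff_monomial, Fin.val_inj] using
    congrArg (Polynomial.coeff · i) hp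

theorem eq_zero_of_forall_one_add_smul_apply_sum_eq_zero (N : Module.End K M) {n : ℕ}
    {q : Fin n → M} (h : ∀ l : K, (1 + l • N) (∑ i : Fin n, l ^ (i : ℕ) • q i) = 0) : q = 0 := by
  let shifted : Fin (n + 1) → M := Fin.cons 0 fun i => N (q i)
  have hcoeff : Fin.snoc q 0 + shifted = 0 := by
    refine eq_zero_of_forall_sum_pow_smul_eq_zero (K := K) fun l => ?_
    have h₁ : ∑ i : Fin (n + 1), l ^ (i : ℕ) • Fin.snoc (α := fun _ => M) q 0 i
        = ∑ i : Fin n, l ^ (i : ℕ) • q i := by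
      simp [Fin.sum_univ_castSucc]
    have h₂ : ∑ i : Fin (n + 1), l ^ (i : ℕ) • shifted i
        = l • N (∑ i : Fin n, l ^ (i : ℕ) • q i) := by
      simp [shifted, Fin.sum_univ_succ, map_sum, Finset.smul_sum, pow_succ, mul_smul, smul_comm l]
    simpa only [Pi.add_apply, smul_add, Finset.sum_add_distrib, h₁, h₂, LinearMap.add_apply,
      Module.End.one_apply, LinearMap.smul_apply] using h l
  cases n with
  | zero => exact funext fun i => i.elim0
  | succ m =>
    funext i
    induction i using Fin.induction with
    | zero => simpa [shifted] using congrFun hcoeff 0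
    | succ i ih =>
      have := congrFun hcoeff i.succ.castSucc
      rw [Pi.add_apply, Fin.snoc_castSucc, ← Fin.succ_castSucc] at this
      simpa [shifted, ih] using this

end VanishingPolynomial

section Trilinear

variable {R M M' : Type*} [CommRing R] [AddCommGroup M] [Module R M] [AddCommGroup M']
  [Module R M']

def jacobiator (c d : M →ₗ[R] M →ₗ[R] M →ₗ[R] M) (x y z t e : M) : M :=
  c x y (d z t e) - c (d x y z) t e - c z (d x y t) e - c z t (d x y e)

theorem jacobiator_self_eq_zero_iff {c : M →ₗ[R] M →ₗ[R] M →ₗ[R] M} {x y z t e : M} :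
    jacobiator c c x y z t e = 0 ↔
      c x y (c z t e) = c (c x y z) t e + c z (c x y t) e + c z t (c x y e) := by
  rw [jacobiator, sub_sub, sub_sub, sub_eq_zero, add_assoc]

theorem map_jacobiator {c : M →ₗ[R] M →ₗ[R] M →ₗ[R] M} {d : M' →ₗ[R] M' →ₗ[R] M' →ₗ[R] M'}
    (φ : M →ₗ[R] M') (hφ : ∀ x y z, φ (c x y z) = d (φ x) (φ y) (φ z)) (x y z t e : M) :
    φ (jacobiator c c x y z t e) = jacobiator d d (φ x) (φ y) (φ z) (φ t) (φ e) := by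
  simp only [jacobiator, map_sub, hφ]

theorem exists_jacobiator_quadratic_eq_sum (c₀ c₁ c₂ : M →ₗ[R] M →ₗ[R] M →ₗ[R] M)
    (x y z t e : M) :
    ∃ q : Fin 5 → M, q 4 = jacobiator c₂ c₂ x y z t e ∧ ∀ l : R,
      jacobiator (c₀ + l • c₁ + l ^ 2 • c₂) (c₀ + l • c₁ + l ^ 2 • c₂) x y z t e
        = ∑ k : Fin 5, l ^ (k : ℕ) • q k := by
  refine ⟨![jacobiator c₀ c₀ x y z t e,
    jacobiator c₀ c₁ x y z t e + jacobiator c₁ c₀ x y z t e,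
    jacobiator c₀ c₂ x y z t e + jacobiator c₁ c₁ x y z t e + jacobiator c₂ c₀ x y z t e,
    jacobiator c₁ c₂ x y z t e + jacobiator c₂ c₁ x y z t e,
    jacobiator c₂ c₂ x y z t e], rfl, fun l => ?_⟩
  simp only [jacobiator, LinearMap.add_apply, LinearMap.smul_apply, map_add, map_smul,
    Fin.sum_univ_five, Fin.isValue, Fin.coe_ofNat_eq_mod, Nat.reduceMod, Matrix.cons_val]
  module

end Trilinear

section Nijenhuis

variable {K M : Type*} [Field K] [AddCommGroup M] [Module K M]
variable (b : M →ₗ[K] M →ₗ[K] M →ₗ[K] M) (N : M →ₗ[K] M)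

def nijFirstOrder : M →ₗ[K] M →ₗ[K] M →ₗ[K] M :=
  b ∘ₗ N + b.compl₂ N + b.compr₂ (LinearMap.lcomp K M N)
    - b.compr₂ (LinearMap.llcomp K M M M N)

def nijBracketₗ : M →ₗ[K] M →ₗ[K] M →ₗ[K] M :=
  (b ∘ₗ N).compl₂ N + (b.compl₂ N).compr₂ (LinearMap.lcomp K M N)
    + (b ∘ₗ N).compr₂ (LinearMap.lcomp K M N)
    - (nijFirstOrder b N).compr₂ (LinearMap.llcomp K M M M N)

@[simp]
theorem nijBracketₗ_apply (x y z : M) : nijBracketₗ b N x y z = nijBracket b N x y z := rfl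

def IsNijenhuis : Prop :=
  ∀ x y z, b (N x) (N y) (N z) = N (nijBracket b N x y z)

def nijPencil (l : K) : M →ₗ[K] M →ₗ[K] M →ₗ[K] M :=
  b + l • nijFirstOrder b N + l ^ 2 • nijBracketₗ b N

variable {b N}

theorem one_add_smul_apply_nijPencil (hN : IsNijenhuis b N) (l : K) (x y z : M) :
    (1 + l • N) (nijPencil b N l x y z) = b ((1 + l • N) x) ((1 + l • N) y) ((1 + l • N) z) := by
  have h := hN x y z
  simp only [nijPencil, nijFirstOrder, nijBracketₗ_apply, nijBracket, LinearMap.add_apply,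
    LinearMap.sub_apply, LinearMap.smul_apply, Module.End.one_apply, LinearMap.comp_apply,
    LinearMap.compl₂_apply, LinearMap.compr₂_apply, LinearMap.lcomp_apply,
    LinearMap.llcomp_apply, map_add, map_sub, map_smul] at h ⊢
  linear_combination (norm := module) (-l ^ 3) • h

variable [Infinite K]

theorem nijBracket_self_left (hb : ∀ x z, b x x z = 0) (hN : IsNijenhuis b N) (x z : M) :
    nijBracket b N x x z = 0 := by
  have hq := eq_zero_of_forall_one_add_smul_apply_sum_eq_zero N
    (q := ![b x x z, nijFirstOrder b N x x z, nijBracket b N x x z]) fun l => by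
      rw [← hb ((1 + l • N) x) ((1 + l • N) z), ← one_add_smul_apply_nijPencil hN]
      simp [Fin.sum_univ_three, nijPencil]
  exact congrFun hq 2

theorem nijBracket_cyclic (hb : ∀ x y z, b x y z + b y z x + b z x y = 0)
    (hN : IsNijenhuis b N) (x y z : M) :
    nijBracket b N x y z + nijBracket b N y z x + nijBracket b N z x y = 0 := by
  have hq := eq_zero_of_forall_one_add_smul_apply_sum_eq_zero N
    (q := ![b x y z + b y z x + b z x y,
      nijFirstOrder b N x y z + nijFirstOrder b N y z x + nijFirstOrder b N z x y,
      nijBracket b N x y z + nijBracket b N y z x + nijBracket b N z x y]) fun l => by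
      rw [← hb ((1 + l • N) x) ((1 + l • N) y) ((1 + l • N) z)]
      simp only [← one_add_smul_apply_nijPencil hN, ← map_add]
      simp only [nijPencil, LinearMap.add_apply, LinearMap.smul_apply, nijBracketₗ_apply,
        Fin.sum_univ_three, Fin.isValue, Fin.coe_ofNat_eq_mod, Matrix.cons_val,
        Module.End.one_apply, map_add, map_smul]
      module
  exact congrFun hq 2

theorem jacobiator_nijBracketₗ_eq_zero
    (hb : ∀ x y z t e, jacobiator b b x y z t e = 0) (hN : IsNijenhuis b N)
    (x y z t e : M) :
    jacobiator (nijBracketₗ b N) (nijBracketₗ b N) x y z t e = 0 := by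
  obtain ⟨q, hq₄, hq⟩ :=
    exists_jacobiator_quadratic_eq_sum b (nijFirstOrder b N) (nijBracketₗ b N) x y z t e
  have hq₀ : q = 0 := eq_zero_of_forall_one_add_smul_apply_sum_eq_zero N fun l => by
    rw [← hq l]
    exact (map_jacobiator _ (one_add_smul_apply_nijPencil hN l) x y z t e).trans (hb ..)
  rw [← hq₄, hq₀, Pi.zero_apply]

end Nijenhuis

/-- if `N` is a Nijenhuis operator on the L.t.s `(L, b)`, then the deformed
bracket `[·,·,·]_N` is again a Lie triple system bracket, and `N` is a homomorphism of
Lie triple systems from `(L, [·,·,·]_N)` to `(L, [·,·,·])`. -/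
theorem nijenhuis_deformed_lts
    (b : L →ₗ[F] L →ₗ[F] L →ₗ[F] L) (hb : IsLTS b)
    (N : L →ₗ[F] L)
    (hN : ∀ x y z, b (N x) (N y) (N z) = N (nijBracket b N x y z)) :
    (∀ x z, nijBracket b N x x z = 0) ∧
    (∀ x y z, nijBracket b N x y z + nijBracket b N y z x + nijBracket b N z x y = 0) ∧
    (∀ x y z t e,
      nijBracket b N x y (nijBracket b N z t e)
        = nijBracket b N (nijBracket b N x y z) t e
          + nijBracket b N z (nijBracket b N x y t) e
          + nijBracket b N z t (nijBracket b N x y e)) ∧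
    (∀ x y z, N (nijBracket b N x y z) = b (N x) (N y) (N z)) := by
  obtain ⟨hskew, hcyclic, hfund⟩ := hb
  refine ⟨nijBracket_self_left hskew hN, nijBracket_cyclic hcyclic hN, fun x y z t e => ?_,
    fun x y z => (hN x y z).symm⟩
  have hjac (x y z t e : L) : jacobiator b b x y z t e = 0 :=
    jacobiator_self_eq_zero_iff.2 (hfund x y z t e)
  simpa only [jacobiator_self_eq_zero_iff, nijBracketₗ_apply] using
    jacobiator_nijBracketₗ_eq_zero hjac hN x y z t e
end

section
/- Let (L,[·,·,·];θ) be a Lie triple system with a representation (V,θ), and let T: V → L be a linear map. Define T̄: L ⊕ V → L ⊕ V by T̄(x + u) = T(u). Then T is an O-operator if and only if T̄ is a Nijenhuis operator on the semidirect product Lie triple system L ⊕ V. -/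
/-!
Since `T̄` takes values in `L × 0` and kills it, `T̄ ∘ T̄ = 0`, so all terms of the Nijenhuis
identity for `T̄` containing `T̄ ∘ T̄` vanish. Evaluated at `(x, u), (y, v), (z, w)`, the
identity reduces to its `L`-component, which is the `𝒪`-operator identity for `u, v, w`.
-/

variable {F L V : Type*} [Field F] [CharZero F]
  [AddCommGroup L] [Module F L] [AddCommGroup V] [Module F V]

/-- The lift `T̄ : L ⊕ V → L ⊕ V`, `T̄(x + u) = T u`, i.e. `T̄(x, u) = (T u, 0)`. -/
def barT (T : V →ₗ[F] L) (p : L × V) : L × V := (T p.2, 0)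

section

variable {F L V : Type*} [Field F] [AddCommGroup L] [Module F L] [AddCommGroup V] [Module F V]
  (b : L →ₗ[F] L →ₗ[F] L →ₗ[F] L) (θ : L →ₗ[F] L →ₗ[F] Module.End F V) (T : V →ₗ[F] L)

@[simp]
lemma barT_fst (p : L × V) : (barT T p).1 = T p.2 := rfl

@[simp]
lemma barT_snd (p : L × V) : (barT T p).2 = 0 := rfl

lemma barT_sub (p q : L × V) : barT T (p - q) = barT T p - barT T q := by
  simp [barT]

lemma barT_barT (p : L × V) : barT T (barT T p) = 0 := by
  simp [barT]

lemma barT_sub_barT (p q : L × V) : barT T (p - barT T q) = barT T p := by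
  rw [barT_sub, barT_barT, sub_zero]

lemma sd_barT_barT_barT (p q r : L × V) :
    sd b θ (barT T p) (barT T q) (barT T r) = (b (T p.2) (T q.2) (T r.2), 0) := by
  simp only [sd, barT_fst, barT_snd, map_zero, sub_self, add_zero]

lemma barT_sd_add_sd_add_sd (p q r : L × V) :
    barT T (sd b θ (barT T p) (barT T q) r + sd b θ p (barT T q) (barT T r)
        + sd b θ (barT T p) q (barT T r)) =
      (T (Dmap θ (T p.2) (T q.2) r.2 + θ (T q.2) (T r.2) p.2 - θ (T p.2) (T r.2) q.2), 0) := by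
  simp only [barT, sd, Dmap, Prod.snd_add, map_zero, LinearMap.sub_apply, sub_self, zero_add,
    add_zero, sub_zero, zero_sub]
  congr 2
  abel

end

theorem oOp_iff_bar_nijenhuis_general
    (b : L →ₗ[F] L →ₗ[F] L →ₗ[F] L)
    (θ : L →ₗ[F] L →ₗ[F] Module.End F V)
    (T : V →ₗ[F] L) :
    IsOOp b θ T ↔
      ∀ p q r : L × V,
        sd b θ (barT T p) (barT T q) (barT T r) =
          barT T (sd b θ (barT T p) (barT T q) r + sd b θ p (barT T q) (barT T r)
              + sd b θ (barT T p) q (barT T r)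
            - barT T (sd b θ (barT T p) q r + sd b θ p (barT T q) r + sd b θ p q (barT T r)
                - barT T (sd b θ p q r))) := by
  simp only [barT_sub_barT, sd_barT_barT_barT, barT_sd_add_sd_add_sd, Prod.mk.injEq, and_true]
  exact ⟨fun h p q r => h p.2 q.2 r.2, fun h u v w => h (0, u) (0, v) (0, w)⟩

/-- `T` is an `𝒪`-operator iff `T̄` is a Nijenhuis operator on the
semidirect product Lie triple system `L ⊕ V`. -/
theorem oOp_iff_bar_nijenhuis
    (b : L →ₗ[F] L →ₗ[F] L →ₗ[F] L) (hb : IsLTS b)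
    (θ : L →ₗ[F] L →ₗ[F] Module.End F V) (hθ : IsLTSRep b θ)
    (T : V →ₗ[F] L) :
    IsOOp b θ T ↔
      ∀ p q r : L × V,
        sd b θ (barT T p) (barT T q) (barT T r) =
          barT T (sd b θ (barT T p) (barT T q) r + sd b θ p (barT T q) (barT T r)
              + sd b θ (barT T p) q (barT T r)
            - barT T (sd b θ (barT T p) q r + sd b θ p (barT T q) r + sd b θ p q (barT T r)
                - barT T (sd b θ p q r))) :=
  oOp_iff_bar_nijenhuis_general b θ T
end

section
/- Let (L,[·,·,·];θ) be a Lie triple system with a representation (V,θ), and let T: V → L be an O-operator. Then the trilinear operation {u,v,w} := θ(Tv,Tw)u defines a pre-Lie triple system structure on V, i.e. it satisfies: {x5,x1,[x2,x3,x4]_C} = {{x5,x1,x2},x3,x4} − {{x5,x1,x3},x2,x4} + {x2,x3,{x5,x1,x4}}* and {x1,x2,{x5,x3,x4}}* = {{x1,x2,x5}*,x3,x4} + {x5,[x1,x2,x3]_C,x4} + {x5,x3,[x1,x2,x4]_C} for all x1,...,x5 ∈ V, where {x,y,z}* := {z,y,x} − {z,x,y} and [x,y,z]_C := {x,y,z}*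 + {x,y,z} − {y,x,z}. -/
/-! Applying `T` to `[x,y,z]_C` gives `[Tx,Ty,Tz]` (this is the `𝒪`-operator identity), so both
pre-Lie triple system identities are the two representation axioms, with `Tx₁, …, Tx₄` as
arguments, evaluated at `x₅`. -/

variable {F L V : Type*} [Field F] [CharZero F]
  [AddCommGroup L] [Module F L] [AddCommGroup V] [Module F V]

/-- The operation `{u,v,w} := θ(Tv, Tw)u` on `V` induced by an `𝒪`-operator. -/
def preb (θ : L →ₗ[F] L →ₗ[F] Module.End F V) (T : V →ₗ[F] L) (u v w : V) : V :=
  θ (T v) (T w) u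

/-- `{x,y,z}* := {z,y,x} − {z,x,y}`. -/
def prebStar (θ : L →ₗ[F] L →ₗ[F] Module.End F V) (T : V →ₗ[F] L) (x y z : V) : V :=
  preb θ T z y x - preb θ T z x y

/-- `[x,y,z]_C := {x,y,z}* + {x,y,z} − {y,x,z}`. -/
def prebC (θ : L →ₗ[F] L →ₗ[F] Module.End F V) (T : V →ₗ[F] L) (x y z : V) : V :=
  prebStar θ T x y z + preb θ T x y z - preb θ T y x z

section

variable {F L V : Type*} [Field F] [AddCommGroup L] [Module F L] [AddCommGroup V] [Module F V]
  {b : L →ₗ[F] L →ₗ[F] L →ₗ[F] L} {θ : L →ₗ[F] L →ₗ[F] Module.End F V} {T : V →ₗ[F] L}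

theorem IsOOp.map_prebC (hT : IsOOp b θ T) (u v w : V) :
    T (prebC θ T u v w) = b (T u) (T v) (T w) := by
  rw [hT]
  rfl

theorem IsLTSRep.θ_bracket (hθ : IsLTSRep b θ) (x y z t : L) :
    θ x (b y z t) = θ z t * θ x y - θ y t * θ x z + Dmap θ y z * θ x t := by
  rw [← sub_eq_zero, ← neg_eq_zero, ← hθ.1 x y z t]
  abel

theorem IsLTSRep.Dmap_mul_θ (hθ : IsLTSRep b θ) (x y z t : L) :
    Dmap θ x y * θ z t = θ z t * Dmap θ x y + θ (b x y z) t + θ z (b x y t) := by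
  rw [← sub_eq_zero, ← neg_eq_zero, ← hθ.2 x y z t]
  abel

theorem preb_prebC (hθ : IsLTSRep b θ) (hT : IsOOp b θ T) (x5 x1 x2 x3 x4 : V) :
    preb θ T x5 x1 (prebC θ T x2 x3 x4)
      = preb θ T (preb θ T x5 x1 x2) x3 x4 - preb θ T (preb θ T x5 x1 x3) x2 x4
        + prebStar θ T x2 x3 (preb θ T x5 x1 x4) := by
  have h := LinearMap.congr_fun (hθ.θ_bracket (T x1) (T x2) (T x3) (T x4)) x5
  simp only [preb, prebStar, hT.map_prebC, h, Dmap, Module.End.mul_apply, LinearMap.sub_apply,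
    LinearMap.add_apply]

theorem prebStar_preb (hθ : IsLTSRep b θ) (hT : IsOOp b θ T) (x1 x2 x3 x4 x5 : V) :
    prebStar θ T x1 x2 (preb θ T x5 x3 x4)
      = preb θ T (prebStar θ T x1 x2 x5) x3 x4 + preb θ T x5 (prebC θ T x1 x2 x3) x4
        + preb θ T x5 x3 (prebC θ T x1 x2 x4) := by
  have h := LinearMap.congr_fun (hθ.Dmap_mul_θ (T x1) (T x2) (T x3) (T x4)) x5
  simp only [preb, prebStar, hT.map_prebC, Dmap, Module.End.mul_apply, LinearMap.sub_apply,
    LinearMap.add_apply, map_sub] at h ⊢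
  rw [← h]

end

theorem oOp_induces_preLTS_general
    (b : L →ₗ[F] L →ₗ[F] L →ₗ[F] L)
    (θ : L →ₗ[F] L →ₗ[F] Module.End F V) (hθ : IsLTSRep b θ)
    (T : V →ₗ[F] L) (hT : IsOOp b θ T) :
    (∀ x5 x1 x2 x3 x4 : V,
      preb θ T x5 x1 (prebC θ T x2 x3 x4)
        = preb θ T (preb θ T x5 x1 x2) x3 x4 - preb θ T (preb θ T x5 x1 x3) x2 x4
          + prebStar θ T x2 x3 (preb θ T x5 x1 x4)) ∧
    (∀ x1 x2 x3 x4 x5 : V,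
      prebStar θ T x1 x2 (preb θ T x5 x3 x4)
        = preb θ T (prebStar θ T x1 x2 x5) x3 x4 + preb θ T x5 (prebC θ T x1 x2 x3) x4
          + preb θ T x5 x3 (prebC θ T x1 x2 x4)) :=
  ⟨preb_prebC hθ hT, prebStar_preb hθ hT⟩

/-- if `T` is an `𝒪`-operator, then `{u,v,w} := θ(Tv,Tw)u` is a pre-Lie
triple system structure on `V`. -/
theorem oOp_induces_preLTS
    (b : L →ₗ[F] L →ₗ[F] L →ₗ[F] L) (hb : IsLTS b)
    (θ : L →ₗ[F] L →ₗ[F] Module.End F V) (hθ : IsLTSRep b θ)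
    (T : V →ₗ[F] L) (hT : IsOOp b θ T) :
    (∀ x5 x1 x2 x3 x4 : V,
      preb θ T x5 x1 (prebC θ T x2 x3 x4)
        = preb θ T (preb θ T x5 x1 x2) x3 x4 - preb θ T (preb θ T x5 x1 x3) x2 x4
          + prebStar θ T x2 x3 (preb θ T x5 x1 x4)) ∧
    (∀ x1 x2 x3 x4 x5 : V,
      prebStar θ T x1 x2 (preb θ T x5 x3 x4)
        = preb θ T (prebStar θ T x1 x2 x5) x3 x4 + preb θ T x5 (prebC θ T x1 x2 x3) x4
          + preb θ T x5 x3 (prebC θ T x1 x2 x4)) :=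
  oOp_induces_preLTS_general b θ hθ T hT
end

section
/- Let T: V → L be an O-operator on a Lie triple system (L,[·,·,·];θ) with representation (V,θ). Then the bracket [u,v,w]_T := D(Tu,Tv)w + θ(Tv,Tw)u − θ(Tu,Tw)v makes (V,[·,·,·]_T) a Lie triple system, and T is a homomorphism of Lie triple systems, i.e. T([u,v,w]_T) = [Tu,Tv,Tw] for all u,v,w ∈ V. -/
/-!
The O-operator identity says exactly that `T` intertwines `[·,·,·]_T` with `[·,·,·]`, so every
inner bracket `T [u,v,w]_T` occurring in the fundamental identity for `[·,·,·]_T` may be replaced by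
`[Tu,Tv,Tw]`. After this substitution the fundamental identity becomes a linear combination of the
two representation axioms evaluated at images under `T`.
-/

variable {F L V : Type*} [Field F] [CharZero F]
  [AddCommGroup L] [Module F L] [AddCommGroup V] [Module F V]

/-- The descendent bracket `[u,v,w]_T := D(Tu,Tv)w + θ(Tv,Tw)u − θ(Tu,Tw)v` on `V`. -/
def brkT (θ : L →ₗ[F] L →ₗ[F] Module.End F V) (T : V →ₗ[F] L) (u v w : V) : V :=
  Dmap θ (T u) (T v) w + θ (T v) (T w) u - θ (T u) (T w) v

section

omit [CharZero F]

section Representation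

variable {b : L →ₗ[F] L →ₗ[F] L →ₗ[F] L} {θ : L →ₗ[F] L →ₗ[F] Module.End F V}

theorem IsLTSRep.first_apply (hθ : IsLTSRep b θ) (x y z t : L) (e : V) :
    θ z t (θ x y e) - θ y t (θ x z e) - θ x (b y z t) e
      + (θ z y (θ x t e) - θ y z (θ x t e)) = 0 := by
  simpa [Dmap] using DFunLike.congr_fun (hθ.1 x y z t) e

theorem IsLTSRep.second_apply (hθ : IsLTSRep b θ) (x y z t : L) (e : V) :
    θ z t (θ y x e) - θ z t (θ x y e) - (θ y x (θ z t e) - θ x y (θ z t e))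
      + θ (b x y z) t e + θ z (b x y t) e = 0 := by
  simpa [Dmap, sub_add_eq_add_sub] using DFunLike.congr_fun (hθ.2 x y z t) e

end Representation

section Descendent

variable (θ : L →ₗ[F] L →ₗ[F] Module.End F V) (T : V →ₗ[F] L)

theorem brkT_self (u w : V) : brkT θ T u u w = 0 := by
  simp [brkT, Dmap]

theorem brkT_cyclic (u v w : V) :
    brkT θ T u v w + brkT θ T v w u + brkT θ T w u v = 0 := by
  simp only [brkT, Dmap, LinearMap.sub_apply]
  abel

variable {b : L →ₗ[F] L →ₗ[F] L →ₗ[F] L} {θ T}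

theorem IsOOp.map_brkT (hT : IsOOp b θ T) (u v w : V) :
    T (brkT θ T u v w) = b (T u) (T v) (T w) :=
  (hT u v w).symm

theorem IsOOp.brkT_brkT (hθ : IsLTSRep b θ) (hT : IsOOp b θ T) (u v w s r : V) :
    brkT θ T u v (brkT θ T w s r)
      = brkT θ T (brkT θ T u v w) s r + brkT θ T w (brkT θ T u v s) r
        + brkT θ T w s (brkT θ T u v r) := by
  simp only [brkT, ← hT _ _ _]
  simp only [Dmap, LinearMap.sub_apply, map_add, map_sub]
  linear_combination (norm := abel1)
    -hθ.first_apply (T v) (T w) (T s) (T r) u + hθ.first_apply (T u) (T w) (T s) (T r) v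
    - hθ.second_apply (T u) (T v) (T s) (T r) w + hθ.second_apply (T u) (T v) (T w) (T r) s
    - hθ.second_apply (T u) (T v) (T s) (T w) r + hθ.second_apply (T u) (T v) (T w) (T s) r

end Descendent

end

theorem oOp_descendent_lts_general
    (b : L →ₗ[F] L →ₗ[F] L →ₗ[F] L)
    (θ : L →ₗ[F] L →ₗ[F] Module.End F V) (hθ : IsLTSRep b θ)
    (T : V →ₗ[F] L) (hT : IsOOp b θ T) :
    (∀ u w, brkT θ T u u w = 0) ∧
    (∀ u v w, brkT θ T u v w + brkT θ T v w u + brkT θ T w u v = 0) ∧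
    (∀ u v w s r,
      brkT θ T u v (brkT θ T w s r)
        = brkT θ T (brkT θ T u v w) s r + brkT θ T w (brkT θ T u v s) r
          + brkT θ T w s (brkT θ T u v r)) ∧
    (∀ u v w, T (brkT θ T u v w) = b (T u) (T v) (T w)) :=
  ⟨brkT_self θ T, brkT_cyclic θ T, hT.brkT_brkT hθ, hT.map_brkT⟩

/-- if `T` is an `𝒪`-operator, then `(V, [·,·,·]_T)` is a Lie triple system
and `T` is a homomorphism of Lie triple systems. -/
theorem oOp_descendent_lts
    (b : L →ₗ[F] L →ₗ[F] L →ₗ[F] L) (hb : IsLTS b)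
    (θ : L →ₗ[F] L →ₗ[F] Module.End F V) (hθ : IsLTSRep b θ)
    (T : V →ₗ[F] L) (hT : IsOOp b θ T) :
    (∀ u w, brkT θ T u u w = 0) ∧
    (∀ u v w, brkT θ T u v w + brkT θ T v w u + brkT θ T w u v = 0) ∧
    (∀ u v w s r,
      brkT θ T u v (brkT θ T w s r)
        = brkT θ T (brkT θ T u v w) s r + brkT θ T w (brkT θ T u v s) r
          + brkT θ T w s (brkT θ T u v r)) ∧
    (∀ u v w, T (brkT θ T u v w) = b (T u) (T v) (T w)) :=
  oOp_descendent_lts_general b θ hθ T hT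
end

section
/- Let T: V → L be an O-operator on a Lie triple system (L,[·,·,·];θ) with representation (V,θ). Define θ_T: V×V → End(L) by θ_T(u,v)x := [x,Tu,Tv] + T( θ(x,Tv)u − D(x,Tu)v ). Then (L,θ_T) is a representation of the descendent Lie triple system (V,[·,·,·]_T), i.e. θ_T satisfies the two representation identities with respect to the bracket [·,·,·]_T. -/
variable {F L V : Type*} [Field F] [CharZero F]
  [AddCommGroup L] [Module F L] [AddCommGroup V] [Module F V]

/-- The induced action `θ_T(u,v)x := [x,Tu,Tv] + T(θ(x,Tv)u − D(x,Tu)v)` of `V` on `L`. -/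
def thetaT (b : L →ₗ[F] L →ₗ[F] L →ₗ[F] L) (θ : L →ₗ[F] L →ₗ[F] Module.End F V)
    (T : V →ₗ[F] L) (u v : V) (x : L) : L :=
  b x (T u) (T v) + T (θ x (T v) u - Dmap θ x (T u) v)

/-- `D_T(u,v) := θ_T(v,u) − θ_T(u,v)`. -/
def DT (b : L →ₗ[F] L →ₗ[F] L →ₗ[F] L) (θ : L →ₗ[F] L →ₗ[F] Module.End F V)
    (T : V →ₗ[F] L) (u v : V) (x : L) : L :=
  thetaT b θ T v u x - thetaT b θ T u v x

/-! The graph `{(Tu, u)}` of an `𝒪`-operator `T` is a sub-Lie triple system of the semidirect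
product `L ⋉_θ V` on which the bracket is `[·,·,·]_T`, and `(x, u) ↦ x - Tu` projects `L × V` onto
`L` along it. Bracketing with two graph elements `(Tu, u)`, `(Tv, v)` commutes with this projection
up to `θ_T(u, v)`, so projecting the fundamental identity of `L ⋉_θ V`, with an arbitrary element
in the first (resp. third) slot and graph elements elsewhere, gives the two representation
identities of `θ_T`. -/

section

omit [CharZero F]

variable {b : L →ₗ[F] L →ₗ[F] L →ₗ[F] L} {θ : L →ₗ[F] L →ₗ[F] Module.End F V}

theorem IsLTS.skew {M : Type*} [AddCommGroup M] [Module F M] {B : M →ₗ[F] M →ₗ[F] M →ₗ[F] M}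
    (hB : IsLTS B) (x y z : M) : B y x z = -B x y z := by
  have h := hB.1 (x + y) z
  simp only [map_add, LinearMap.add_apply, hB.1, zero_add, add_zero] at h
  exact eq_neg_of_add_eq_zero_left h

theorem IsLTSRep.apply₁ (hθ : IsLTSRep b θ) (x y z t : L) (m : V) :
    θ z t (θ x y m) - θ y t (θ x z m) - θ x (b y z t) m + Dmap θ y z (θ x t m) = 0 := by
  simpa using LinearMap.congr_fun (hθ.1 x y z t) m

theorem IsLTSRep.apply₂ (hθ : IsLTSRep b θ) (x y z t : L) (m : V) :
    θ z t (Dmap θ x y m) - Dmap θ x y (θ z t m) + θ (b x y z) t m + θ z (b x y t) m = 0 := by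
  simpa using LinearMap.congr_fun (hθ.2 x y z t) m

theorem IsLTSRep.Dmap_commutator (hθ : IsLTSRep b θ) (x y z t : L) (m : V) :
    Dmap θ x y (Dmap θ z t m) - Dmap θ z t (Dmap θ x y m)
      = Dmap θ (b x y z) t m + Dmap θ z (b x y t) m := by
  have h₁ := hθ.apply₂ x y t z m
  have h₂ := hθ.apply₂ x y z t m
  simp only [Dmap, LinearMap.sub_apply, map_sub] at h₁ h₂ ⊢
  linear_combination (norm := module) h₂ - h₁

variable (b θ) in
def sdLinear : (L × V) →ₗ[F] (L × V) →ₗ[F] (L × V) →ₗ[F] (L × V) :=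
  LinearMap.mk₂ F
    (fun p q =>
      { toFun := sd b θ p q
        map_add' := fun r r' => Prod.ext (by simp [sd]) (by simp [sd]; abel)
        map_smul' := fun c r => Prod.ext (by simp [sd]) (by simp [sd, smul_sub]) })
    (fun p p' q => LinearMap.ext fun r => Prod.ext (by simp [sd]) (by simp [sd, Dmap]; module))
    (fun c p q => LinearMap.ext fun r => Prod.ext (by simp [sd]) (by simp [sd, Dmap]; module))
    (fun p q q' => LinearMap.ext fun r => Prod.ext (by simp [sd]) (by simp [sd, Dmap]; module))
    (fun c p q => LinearMap.ext fun r => Prod.ext (by simp [sd]) (by simp [sd, Dmap]; module))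

theorem sdLinear_apply (p q r : L × V) : sdLinear b θ p q r = sd b θ p q r := rfl

theorem isLTS_sdLinear (hb : IsLTS b) (hθ : IsLTSRep b θ) : IsLTS (sdLinear b θ) := by
  refine ⟨fun p r => ?_, fun p q r => ?_, fun p q r s e => ?_⟩
  · exact Prod.ext (hb.1 p.1 r.1) (by simp [sdLinear_apply, sd, Dmap])
  · refine Prod.ext (hb.2.1 p.1 q.1 r.1) ?_
    simp only [sdLinear_apply, sd, Dmap, LinearMap.sub_apply, Prod.snd_add, Prod.snd_zero]
    abel
  · refine Prod.ext (hb.2.2 p.1 q.1 r.1 s.1 e.1) ?_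
    simp only [sdLinear_apply, sd, map_add, map_sub, Prod.snd_add]
    linear_combination (norm := module)
      hθ.apply₁ p.1 r.1 s.1 e.1 q.2 - hθ.apply₁ q.1 r.1 s.1 e.1 p.2
        - hθ.apply₂ p.1 q.1 s.1 e.1 r.2 + hθ.apply₂ p.1 q.1 r.1 e.1 s.2
        + hθ.Dmap_commutator p.1 q.1 r.1 s.1 e.2

theorem IsLTS.rep_of_projection {M A W : Type*} [AddCommGroup M] [Module F M]
    [AddCommGroup W] [Module F W]
    {B : M →ₗ[F] M →ₗ[F] M →ₗ[F] M} (hB : IsLTS B) {i : A → M} {bA : A → A → A → A}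
    (hi : ∀ a a' a'', B (i a) (i a') (i a'') = i (bA a a' a''))
    {p : M →ₗ[F] W} (hp : Function.Surjective p) {ρ : A → A → W → W}
    (hρ : ∀ m a a', p (B m (i a) (i a')) = ρ a a' (p m)) :
    (∀ x y z t w, ρ z t (ρ x y w) - ρ y t (ρ x z w) - ρ x (bA y z t) w
        + (ρ z y (ρ x t w) - ρ y z (ρ x t w)) = 0) ∧
    (∀ x y z t w, ρ z t (ρ y x w - ρ x y w) - (ρ y x (ρ z t w) - ρ x y (ρ z t w))
        + ρ (bA x y z) t w + ρ z (bA x y t) w = 0) := by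
  have hρ_mid : ∀ m a a', p (B (i a) m (i a')) = -ρ a a' (p m) := fun m a a' => by
    rw [hB.skew, map_neg, hρ]
  have hρ_right : ∀ m a a', p (B (i a) (i a') m) = ρ a' a (p m) - ρ a a' (p m) := fun m a a' => by
    have h := congrArg p (hB.2.1 (i a) (i a') m)
    rw [hB.skew m (i a'), map_add, map_add, map_neg, hρ, hρ, map_zero] at h
    linear_combination (norm := module) h
  constructor
  · intro x y z t w
    obtain ⟨m, rfl⟩ := hp w
    have h := congrArg p (hB.2.2 m (i x) (i y) (i z) (i t))
    simp only [hi, map_add, hρ, hρ_mid, hρ_right] at h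
    rw [h]
    abel
  · intro x y z t w
    obtain ⟨m, rfl⟩ := hp w
    have h := congrArg p (hB.2.2 (i x) (i y) m (i z) (i t))
    simp only [hi, map_add, hρ, hρ_right] at h
    rw [h]
    abel

variable {T : V →ₗ[F] L}

theorem IsOOp.sdLinear_graph (hT : IsOOp b θ T) (u v w : V) :
    sdLinear b θ (T u, u) (T v, v) (T w, w) = (T (brkT θ T u v w), brkT θ T u v w) := by
  refine Prod.ext (hT u v w) ?_
  simp only [sdLinear_apply, sd, brkT]
  abel

variable (T) in
def graphProj : (L × V) →ₗ[F] L := LinearMap.fst F L V - T ∘ₗ LinearMap.snd F L V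

theorem graphProj_surjective : Function.Surjective (graphProj T) :=
  fun x => ⟨(x, 0), by simp [graphProj]⟩

theorem IsOOp.graphProj_sdLinear_graph (hT : IsOOp b θ T) (m : L × V) (u v : V) :
    graphProj T (sdLinear b θ m (T u, u) (T v, v)) = thetaT b θ T u v (graphProj T m) := by
  have h := hT m.2 u v
  simp only [Dmap, LinearMap.sub_apply, map_add, map_sub] at h
  simp only [graphProj, sdLinear_apply, sd, thetaT, Dmap, LinearMap.sub_apply, LinearMap.coe_comp,
    Function.comp_apply, LinearMap.coe_fst, LinearMap.coe_snd, map_add, map_sub]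
  linear_combination (norm := module) h

end

/-- if `T` is an `𝒪`-operator, then `(L, θ_T)` is a representation of the
descendent Lie triple system `(V, [·,·,·]_T)`. -/
theorem oOp_induced_representation
    (b : L →ₗ[F] L →ₗ[F] L →ₗ[F] L) (hb : IsLTS b)
    (θ : L →ₗ[F] L →ₗ[F] Module.End F V) (hθ : IsLTSRep b θ)
    (T : V →ₗ[F] L) (hT : IsOOp b θ T) :
    (∀ (x y z t : V) (a : L),
      thetaT b θ T z t (thetaT b θ T x y a) - thetaT b θ T y t (thetaT b θ T x z a)
        - thetaT b θ T x (brkT θ T y z t) a + DT b θ T y z (thetaT b θ T x t a) = 0) ∧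
    (∀ (x y z t : V) (a : L),
      thetaT b θ T z t (DT b θ T x y a) - DT b θ T x y (thetaT b θ T z t a)
        + thetaT b θ T (brkT θ T x y z) t a + thetaT b θ T z (brkT θ T x y t) a = 0) :=
  (isLTS_sdLinear hb hθ).rep_of_projection hT.sdLinear_graph graphProj_surjective
    hT.graphProj_sdLinear_graph
end

section
/- Let T: V → L be an O-operator on a Lie triple system (L,[·,·,·];θ) with representation (V,θ), and let 𝔛 = (x₁,x₂) ∈ L ∧ L. Define ∂_T(𝔛): V → L by ∂_T(𝔛)(v) := T(D(x₁,x₂)v) − [x₁,x₂,Tv]. Then ∂_T(𝔛) is a 1-cocycle of the descendent Lie triple system (V,[·,·,·]_T) with coefficients in the representation (L,θ_T), i.e. D_T(v₁,v₂)∂_T(𝔛)(v₃) − θ_T(v₁,v₃)∂_T(𝔛)(v₂) + θ_T(v₂,v₃)∂_T(𝔛)(v₁) − ∂_T(𝔛)([v₁,v₂,v₃]_T) = 0 for all v₁,v₂,v₃ ∈ V. -/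
variable {F L V : Type*} [Field F] [CharZero F]
  [AddCommGroup L] [Module F L] [AddCommGroup V] [Module F V]

/-- The `1`-cochain `∂_T(𝔛)(v) := T(D(x₁,x₂)v) − [x₁,x₂,Tv]` associated to `𝔛 = (x₁,x₂)`. -/
def partialT (b : L →ₗ[F] L →ₗ[F] L →ₗ[F] L) (θ : L →ₗ[F] L →ₗ[F] Module.End F V)
    (T : V →ₗ[F] L) (x₁ x₂ : L) (v : V) : L :=
  T (Dmap θ x₁ x₂ v) - b x₁ x₂ (T v)

/-!
The graph `{(T v, v)}` of an `𝒪`-operator is closed under the semidirect product bracket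
`[·,·,·]` on `L ⋉ V`, and `[u,v,w]_T` is the bracket there transported along `v ↦ (T v, v)`.
Let `Φ(x, v) := x − T v` be the projection of `L × V` onto `L` along this graph. Then
`θ_T(u,v) x = Φ[(x,0), (Tu,u), (Tv,v)]`, `D_T(u,v) x = Φ[(Tu,u), (Tv,v), (x,0)]`, and
`∂_T(𝔛)(v) = Φ(δ (Tv, v))` for the inner derivation `δ = [(x₂,0), (x₁,0), ·]` of `L ⋉ V`.
Since `Φ` kills the graph, in a bracket whose other two arguments lie on the graph an argument
`(Φ p, 0)` may be replaced by `p`, and the cocycle identity becomes `Φ` applied to the Leibniz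
rule of `δ` on `[(Tv₁,v₁), (Tv₂,v₂), (Tv₃,v₃)]`.
-/

def projAlongGraph (T : V →ₗ[F] L) : L × V →ₗ[F] L :=
  LinearMap.fst F L V - T ∘ₗ LinearMap.snd F L V

section

variable {b : L →ₗ[F] L →ₗ[F] L →ₗ[F] L} {θ : L →ₗ[F] L →ₗ[F] Module.End F V}
  {T : V →ₗ[F] L}

omit [CharZero F]

theorem IsLTS.swap (hb : IsLTS b) (x y z : L) : b y x z = -b x y z := by
  have h := hb.1 (x + y) z
  simp only [map_add, LinearMap.add_apply, hb.1 x z, hb.1 y z, zero_add, add_zero] at h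
  exact eq_neg_of_add_eq_zero_left h

theorem Dmap_swap (x y : L) : Dmap θ y x = -Dmap θ x y :=
  (neg_sub _ _).symm

theorem sd_swap (hb : IsLTS b) (p q r : L × V) : sd b θ p q r = -sd b θ q p r := by
  rw [sd, sd, Prod.neg_mk, hb.swap, Dmap_swap q.1 p.1, LinearMap.neg_apply]
  congr 1
  abel

theorem sd_graph (hT : IsOOp b θ T) (u v w : V) :
    sd b θ (T u, u) (T v, v) (T w, w) = (T (brkT θ T u v w), brkT θ T u v w) := by
  rw [sd, hT, brkT]
  congr 1
  abel

theorem sd_inl_inl_leibniz (hb : IsLTS b) (hθ : IsLTSRep b θ) (y₁ y₂ : L) (p q r : L × V) :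
    sd b θ (y₁, 0) (y₂, 0) (sd b θ p q r)
      = sd b θ (sd b θ (y₁, 0) (y₂, 0) p) q r + sd b θ p (sd b θ (y₁, 0) (y₂, 0) q) r
        + sd b θ p q (sd b θ (y₁, 0) (y₂, 0) r) := by
  have h₁ := DFunLike.congr_fun (hθ.2 y₁ y₂ q.1 r.1) p.2
  have h₂ := DFunLike.congr_fun (hθ.2 y₁ y₂ p.1 r.1) q.2
  have h₃ := DFunLike.congr_fun (hθ.2 y₁ y₂ p.1 q.1) r.2
  have h₄ := DFunLike.congr_fun (hθ.2 y₁ y₂ q.1 p.1) r.2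
  simp only [sd, Dmap, map_zero, LinearMap.sub_apply, LinearMap.add_apply,
    Module.End.mul_apply, LinearMap.zero_apply, sub_zero, zero_add, map_sub, map_add,
    Prod.mk_add_mk, Prod.mk.injEq] at h₁ h₂ h₃ h₄ ⊢
  exact ⟨hb.2.2 y₁ y₂ p.1 q.1 r.1, by linear_combination (norm := module) h₂ + h₃ - h₁ - h₄⟩

@[simp]
theorem projAlongGraph_apply (p : L × V) : projAlongGraph T p = p.1 - T p.2 := rfl

theorem projAlongGraph_sd_graph_graph_left (hT : IsOOp b θ T) (p : L × V) (u v : V) :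
    projAlongGraph T (sd b θ p (T u, u) (T v, v))
      = projAlongGraph T (sd b θ (projAlongGraph T p, 0) (T u, u) (T v, v)) := by
  have h := hT p.2 u v
  simp only [projAlongGraph_apply, sd, Dmap, map_add, map_sub, map_zero,
    LinearMap.sub_apply] at h ⊢
  linear_combination (norm := module) h

theorem projAlongGraph_sd_graph_graph_right (hT : IsOOp b θ T) (u v : V) (r : L × V) :
    projAlongGraph T (sd b θ (T u, u) (T v, v) r)
      = projAlongGraph T (sd b θ (T u, u) (T v, v) (projAlongGraph T r, 0)) := by
  have h := hT u v r.2
  simp only [projAlongGraph_apply, sd, Dmap, map_add, map_sub, map_zero,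
    LinearMap.sub_apply] at h ⊢
  linear_combination (norm := module) h

theorem thetaT_eq_projAlongGraph_sd (u v : V) (x : L) :
    thetaT b θ T u v x = projAlongGraph T (sd b θ (x, 0) (T u, u) (T v, v)) := by
  simp only [thetaT, projAlongGraph_apply, sd, Dmap, map_add, map_sub, map_zero,
    LinearMap.sub_apply]
  module

theorem DT_eq_projAlongGraph_sd (hb : IsLTS b) (u v : V) (x : L) :
    DT b θ T u v x = projAlongGraph T (sd b θ (T u, u) (T v, v) (x, 0)) := by
  have jacobi := hb.2.1 x (T v) (T u)
  have swap₁ := hb.swap (T u) (T v) x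
  have swap₂ := hb.swap x (T u) (T v)
  simp only [DT, thetaT, projAlongGraph_apply, sd, Dmap, map_add, map_sub, map_zero,
    LinearMap.sub_apply]
  linear_combination (norm := module) jacobi - swap₁ - swap₂

theorem partialT_eq_projAlongGraph_sd (hb : IsLTS b) (x₁ x₂ : L) (v : V) :
    partialT b θ T x₁ x₂ v = projAlongGraph T (sd b θ (x₂, 0) (x₁, 0) (T v, v)) := by
  simp only [partialT, projAlongGraph_apply, sd, map_zero, sub_zero, Dmap_swap x₁ x₂,
    hb.swap x₁ x₂, LinearMap.neg_apply, map_neg, zero_add]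
  abel

end

/-- `∂_T(𝔛)` is a `1`-cocycle of the descendent Lie triple system
`(V, [·,·,·]_T)` with coefficients in the representation `(L, θ_T)`. -/
theorem partialT_is_one_cocycle
    (b : L →ₗ[F] L →ₗ[F] L →ₗ[F] L) (hb : IsLTS b)
    (θ : L →ₗ[F] L →ₗ[F] Module.End F V) (hθ : IsLTSRep b θ)
    (T : V →ₗ[F] L) (hT : IsOOp b θ T) (x₁ x₂ : L) :
    ∀ v₁ v₂ v₃ : V,
      DT b θ T v₁ v₂ (partialT b θ T x₁ x₂ v₃)
        - thetaT b θ T v₁ v₃ (partialT b θ T x₁ x₂ v₂)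
        + thetaT b θ T v₂ v₃ (partialT b θ T x₁ x₂ v₁)
        - partialT b θ T x₁ x₂ (brkT θ T v₁ v₂ v₃) = 0 := by
  intro v₁ v₂ v₃
  set δ := sd b θ (x₂, 0) (x₁, 0)
  simp only [DT_eq_projAlongGraph_sd hb, thetaT_eq_projAlongGraph_sd,
    partialT_eq_projAlongGraph_sd hb x₁ x₂]
  rw [← projAlongGraph_sd_graph_graph_right hT, ← projAlongGraph_sd_graph_graph_left hT,
    ← projAlongGraph_sd_graph_graph_left hT, ← sd_graph hT, sd_inl_inl_leibniz hb hθ,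
    sd_swap hb (δ (T v₂, v₂))]
  simp only [map_add, map_neg]
  abel
end

section
/- Let T and T' be two O-operators on the same Lie triple system (L,[·,·,·];θ) with representation (V,θ), and let (φ,ψ) be a morphism of O-operators from T to T'. Then the induced representations intertwine via φ: φ ∘ θ_T(u,v) = θ_{T'}(ψ(u),ψ(v)) ∘ φ for all u,v ∈ V, where θ_T(u,v)x := [x,Tu,Tv] + T( θ(x,Tv)u − D(x,Tu)v ) and analogously for θ_{T'}. -/
variable {F L V : Type*} [Field F] [CharZero F]
  [AddCommGroup L] [Module F L] [AddCommGroup V] [Module F V]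

set_option linter.unusedSectionVars false in
theorem map_Dmap_apply (θ : L →ₗ[F] L →ₗ[F] Module.End F V) (φ : L →ₗ[F] L) (ψ : V →ₗ[F] V)
    (hψ : ∀ x y u, ψ (θ x y u) = θ (φ x) (φ y) (ψ u)) (x y : L) (u : V) :
    ψ (Dmap θ x y u) = Dmap θ (φ x) (φ y) (ψ u) := by
  simp only [Dmap, LinearMap.sub_apply, map_sub, hψ]

theorem oOp_morphism_intertwines_representations_general
    (b : L →ₗ[F] L →ₗ[F] L →ₗ[F] L)
    (θ : L →ₗ[F] L →ₗ[F] Module.End F V)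
    (T T' : V →ₗ[F] L)
    (φ : L →ₗ[F] L) (ψ : V →ₗ[F] V)
    (hφ : ∀ x y z, φ (b x y z) = b (φ x) (φ y) (φ z))
    (hc1 : ∀ u, φ (T u) = T' (ψ u))
    (hc2 : ∀ x y u, ψ (θ x y u) = θ (φ x) (φ y) (ψ u)) :
    ∀ (u v : V) (x : L), φ (thetaT b θ T u v x) = thetaT b θ T' (ψ u) (ψ v) (φ x) := by
  intro u v x
  calc φ (thetaT b θ T u v x)
      = b (φ x) (T' (ψ u)) (T' (ψ v)) + T' (ψ (θ x (T v) u) - ψ (Dmap θ x (T u) v)) := by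
        rw [thetaT, map_add, hφ, hc1, hc1, hc1, map_sub]
    _ = thetaT b θ T' (ψ u) (ψ v) (φ x) := by
        rw [hc2, map_Dmap_apply θ φ ψ hc2, hc1, hc1, thetaT]

/-- for a morphism `(φ, ψ)` of `𝒪`-operators from `T` to `T'`, the induced
representations intertwine via `φ`: `φ ∘ θ_T(u,v) = θ_{T'}(ψu, ψv) ∘ φ`. -/
theorem oOp_morphism_intertwines_representations
    (b : L →ₗ[F] L →ₗ[F] L →ₗ[F] L) (hb : IsLTS b)
    (θ : L →ₗ[F] L →ₗ[F] Module.End F V) (hθ : IsLTSRep b θ)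
    (T T' : V →ₗ[F] L) (hT : IsOOp b θ T) (hT' : IsOOp b θ T')
    (φ : L →ₗ[F] L) (ψ : V →ₗ[F] V)
    (hφ : ∀ x y z, φ (b x y z) = b (φ x) (φ y) (φ z))
    (hc1 : ∀ u, φ (T u) = T' (ψ u))
    (hc2 : ∀ x y u, ψ (θ x y u) = θ (φ x) (φ y) (ψ u)) :
    ∀ (u v : V) (x : L), φ (thetaT b θ T u v x) = thetaT b θ T' (ψ u) (ψ v) (φ x) :=
  oOp_morphism_intertwines_representations_general b θ T T' φ ψ hφ hc1 hc2
end

section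
/- Let T and T' be two O-operators on the same Lie triple system (L,[·,·,·];θ) with representation (V,θ), and let (φ,ψ) be a morphism of O-operators from T to T' with ψ invertible. For n ≥ 1 and any (2n−1)-multilinear map f: V^{2n−1} → L, define γ(f)(u₁,…,u_{2n−1}) := φ(f(ψ⁻¹(u₁),…,ψ⁻¹(u_{2n−1}))). Then γ is a cochain map: δ_{T'}(γ(f)) = γ(δ_T(f)), where δ_T is the Yamaguti coboundary of the descendent L.t.s (V,[·,·,·]_T) with coefficients in (L,θ_T) and δ_{T'} is the analogous coboundary for T'. -/
variable {F L V : Type*} [Field F] [CharZero F]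
  [AddCommGroup L] [Module F L] [AddCommGroup V] [Module F V]

/-- Omit the two consecutive entries at (0-based) positions `p` and `p+1`
from a tuple of length `2m+3`, obtaining a tuple of length `2m+1`. -/
def omit2 {m : ℕ} (p : ℕ) (v : Fin (2 * m + 3) → V) (i : Fin (2 * m + 1)) : V :=
  v (if (i : ℕ) < p then ⟨(i : ℕ), by have := i.isLt; omega⟩
     else ⟨(i : ℕ) + 2, by have := i.isLt; omega⟩)

/-- The Yamaguti coboundary `δ : C^{2n−1}(V, L) → C^{2n+1}(V, L)` (here `n = m + 1 ≥ 1`)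
of the Lie triple system `(V, brk)` with coefficients in the representation given by
`θT` (with `D_T(u,v) := θT(v,u) − θT(u,v)`), written with 0-based indices:
`δf(v₀,…,v_{2m+2}) = θT(v_{2m+1},v_{2m+2}) f(v₀,…,v_{2m})
  − θT(v_{2m},v_{2m+2}) f(v₀,…,v_{2m−1},v_{2m+1})
  + Σ_{k=0}^{m} (−1)^{m+k} D_T(v_{2k},v_{2k+1}) f(…,v̂_{2k},v̂_{2k+1},…)
  + Σ_{k=0}^{m} Σ_{j=2k+2}^{2m+2} (−1)^{m+k+1} f(…,v̂_{2k},v̂_{2k+1},…,[v_{2k},v_{2k+1},v_j],…)`. -/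
def yamagutiDelta {m : ℕ} (brk : V → V → V → V) (θT : V → V → L → L)
    (f : (Fin (2 * m + 1) → V) → L) (v : Fin (2 * m + 3) → V) : L :=
  θT (v ⟨2 * m + 1, by omega⟩) (v ⟨2 * m + 2, by omega⟩)
      (f fun i => v ⟨(i : ℕ), by have := i.isLt; omega⟩)
    - θT (v ⟨2 * m, by omega⟩) (v ⟨2 * m + 2, by omega⟩)
        (f fun i =>
          v (if (i : ℕ) = 2 * m then ⟨2 * m + 1, by omega⟩
             else ⟨(i : ℕ), by have := i.isLt; omega⟩))
    + ∑ k : Fin (m + 1),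
        ((-1 : ℤ) ^ (m + (k : ℕ))) •
          (θT (v ⟨2 * (k : ℕ) + 1, by have := k.isLt; omega⟩)
              (v ⟨2 * (k : ℕ), by have := k.isLt; omega⟩) (f (omit2 (2 * (k : ℕ)) v))
            - θT (v ⟨2 * (k : ℕ), by have := k.isLt; omega⟩)
                (v ⟨2 * (k : ℕ) + 1, by have := k.isLt; omega⟩) (f (omit2 (2 * (k : ℕ)) v)))
    + ∑ k : Fin (m + 1), ∑ j : Fin (2 * m + 3),
        if 2 * (k : ℕ) + 2 ≤ (j : ℕ) then
          ((-1 : ℤ) ^ (m + (k : ℕ) + 1)) •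
            f (omit2 (2 * (k : ℕ))
                (Function.update v j
                  (brk (v ⟨2 * (k : ℕ), by have := k.isLt; omega⟩)
                    (v ⟨2 * (k : ℕ) + 1, by have := k.isLt; omega⟩) (v j))))
        else 0
/-!
The morphism conditions say precisely that `ψ⁻¹` carries the descendent bracket of `T'` to that
of `T`, and that `φ` intertwines the induced actions `θ_{T'}` and `θ_T` along `ψ⁻¹`. The Yamaguti
coboundary is assembled from the bracket and the action alone, so it commutes with any such
intertwining pair; `γ` is the map on cochains induced by `(φ, ψ⁻¹)`.
-/

section Naturality

variable {L L' V V' : Type*} [AddCommGroup L] [AddCommGroup L']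

theorem omit2_update_comp {m : ℕ} (σ : V' → V) (p : ℕ) (v : Fin (2 * m + 3) → V')
    (j : Fin (2 * m + 3)) (x : V') :
    omit2 p (Function.update (σ ∘ v) j (σ x)) = σ ∘ omit2 p (Function.update v j x) := by
  rw [← Function.comp_update]
  rfl

theorem yamagutiDelta_comp {m : ℕ} (brk : V → V → V → V) (θT : V → V → L → L)
    (brk' : V' → V' → V' → V') (θT' : V' → V' → L' → L') (φ : L →+ L') (σ : V' → V)
    (hbrk : ∀ u v w, σ (brk' u v w) = brk (σ u) (σ v) (σ w))
    (hθ : ∀ u v x, θT' u v (φ x) = φ (θT (σ u) (σ v) x))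
    (f : (Fin (2 * m + 1) → V) → L) (v : Fin (2 * m + 3) → V') :
    yamagutiDelta brk' θT' (fun u => φ (f (σ ∘ u))) v
      = φ (yamagutiDelta brk θT f (σ ∘ v)) := by
  simp only [yamagutiDelta, map_add, map_sub, map_sum, map_zsmul, apply_ite φ, map_zero, hθ]
  congr 1
  refine Finset.sum_congr rfl fun k _ => Finset.sum_congr rfl fun j _ => ?_
  simp only [Function.comp_apply, ← hbrk, omit2_update_comp]

end Naturality

section Intertwining

variable {R M N : Type*} [CommRing R] [AddCommGroup M] [Module R M] [AddCommGroup N] [Module R N]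
  {θ : M →ₗ[R] M →ₗ[R] Module.End R N} {T T' : N →ₗ[R] M} {φ : M →ₗ[R] M} {ψ : N ≃ₗ[R] N}

theorem apply_eq_map_apply_symm (hc1 : ∀ u, φ (T u) = T' (ψ u)) (u : N) :
    T' u = φ (T (ψ.symm u)) := by
  rw [hc1, ψ.apply_symm_apply]

theorem apply_map_map_eq (hc2 : ∀ x y u, ψ (θ x y u) = θ (φ x) (φ y) (ψ u)) (x y : M) (u : N) :
    θ (φ x) (φ y) u = ψ (θ x y (ψ.symm u)) := by
  rw [hc2, ψ.apply_symm_apply]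

end Intertwining

section Morphism

variable {K M N : Type*} [Field K] [AddCommGroup M] [Module K M] [AddCommGroup N] [Module K N]
  {b : M →ₗ[K] M →ₗ[K] M →ₗ[K] M} {θ : M →ₗ[K] M →ₗ[K] Module.End K N}
  {T T' : N →ₗ[K] M} {φ : M →ₗ[K] M} {ψ : N ≃ₗ[K] N}

theorem brkT_symm_apply (hc1 : ∀ u, φ (T u) = T' (ψ u))
    (hc2 : ∀ x y u, ψ (θ x y u) = θ (φ x) (φ y) (ψ u)) (u w x : N) :
    ψ.symm (brkT θ T' u w x) = brkT θ T (ψ.symm u) (ψ.symm w) (ψ.symm x) := by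
  simp only [brkT, Dmap, apply_eq_map_apply_symm hc1, LinearMap.sub_apply, map_add, map_sub,
    apply_map_map_eq hc2, ψ.symm_apply_apply]

theorem thetaT_map_apply (hφ : ∀ x y z, φ (b x y z) = b (φ x) (φ y) (φ z))
    (hc1 : ∀ u, φ (T u) = T' (ψ u))
    (hc2 : ∀ x y u, ψ (θ x y u) = θ (φ x) (φ y) (ψ u)) (u w : N) (x : M) :
    thetaT b θ T' u w (φ x) = φ (thetaT b θ T (ψ.symm u) (ψ.symm w) x) := by
  rw [thetaT, thetaT, apply_eq_map_apply_symm hc1 u, apply_eq_map_apply_symm hc1 w, ← hφ, Dmap,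
    Dmap, LinearMap.sub_apply, LinearMap.sub_apply, apply_map_map_eq hc2, apply_map_map_eq hc2,
    apply_map_map_eq hc2, ← map_sub, ← map_sub, ← hc1, ← map_add]

end Morphism

theorem oOp_morphism_cochain_map_general
    (b : L →ₗ[F] L →ₗ[F] L →ₗ[F] L)
    (θ : L →ₗ[F] L →ₗ[F] Module.End F V)
    (T T' : V →ₗ[F] L)
    (φ : L →ₗ[F] L) (ψ : V ≃ₗ[F] V)
    (hφ : ∀ x y z, φ (b x y z) = b (φ x) (φ y) (φ z))
    (hc1 : ∀ u, φ (T u) = T' (ψ u))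
    (hc2 : ∀ x y u, ψ (θ x y u) = θ (φ x) (φ y) (ψ u)) :
    ∀ (m : ℕ) (f : MultilinearMap F (fun _ : Fin (2 * m + 1) => V) L)
      (v : Fin (2 * m + 3) → V),
      yamagutiDelta (brkT θ T') (thetaT b θ T')
          (fun u => φ (f fun i => ψ.symm (u i))) v
        = φ (yamagutiDelta (brkT θ T) (thetaT b θ T) (fun u => f u)
            (fun i => ψ.symm (v i))) := fun _ f v =>
  yamagutiDelta_comp _ _ _ _ φ.toAddMonoidHom ψ.symm (brkT_symm_apply hc1 hc2)
    (thetaT_map_apply hφ hc1 hc2) f v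

/-- for a morphism `(φ, ψ)` of `𝒪`-operators from `T` to `T'` with `ψ`
invertible, the map `γ(f)(u₁,…,u_{2n−1}) := φ(f(ψ⁻¹u₁,…,ψ⁻¹u_{2n−1}))` is a cochain map:
`δ_{T'}(γ f) = γ(δ_T f)` for every `(2n−1)`-multilinear `f : V^{2n−1} → L`, `n ≥ 1`. -/
theorem oOp_morphism_cochain_map
    (b : L →ₗ[F] L →ₗ[F] L →ₗ[F] L) (hb : IsLTS b)
    (θ : L →ₗ[F] L →ₗ[F] Module.End F V) (hθ : IsLTSRep b θ)
    (T T' : V →ₗ[F] L) (hT : IsOOp b θ T) (hT' : IsOOp b θ T')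
    (φ : L →ₗ[F] L) (ψ : V ≃ₗ[F] V)
    (hφ : ∀ x y z, φ (b x y z) = b (φ x) (φ y) (φ z))
    (hc1 : ∀ u, φ (T u) = T' (ψ u))
    (hc2 : ∀ x y u, ψ (θ x y u) = θ (φ x) (φ y) (ψ u)) :
    ∀ (m : ℕ) (f : MultilinearMap F (fun _ : Fin (2 * m + 1) => V) L)
      (v : Fin (2 * m + 3) → V),
      yamagutiDelta (brkT θ T') (thetaT b θ T')
          (fun u => φ (f fun i => ψ.symm (u i))) v
        = φ (yamagutiDelta (brkT θ T) (thetaT b θ T) (fun u => f u)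
            (fun i => ψ.symm (v i))) :=
  oOp_morphism_cochain_map_general b θ T T' φ ψ hφ hc1 hc2
end

section
/- Let T: V → L be an O-operator on a Lie triple system (L,[·,·,·];θ) with representation (V,θ), and let T₁: V → L be a linear map such that T_t := T + tT₁ is an O-operator for every scalar t. Then: (1) T₁ satisfies, for all u,v,w ∈ V, [Tu,Tv,T₁w] + [Tu,T₁v,Tw] + [T₁u,Tv,Tw] = T( D(Tu,T₁v)w + D(T₁u,Tv)w + θ(Tv,T₁w)u + θ(T₁v,Tw)u − θ(Tu,T₁w)v − θ(T₁u,Tw)v ) + T₁( D(Tu,Tv)w + θ(Tv,Tw)u − θ(Tu,Tw)v ) (i.e. T₁ is a 1-cocycle in the cohomology of T); and (2) T₁ is itself an O-operator on (L,[·,·,·];θ). -/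
/-!
`t ↦ [T_t u, T_t v, T_t w] - T_t(D(T_t u, T_t v) w + θ(T_t v, T_t w) u - θ(T_t u, T_t w) v)`
is a cubic polynomial in `t` with values in `L`, whose constant term is the `𝒪`-operator defect
of `T`, whose linear term is the cocycle defect of `T₁`, and whose leading term is the
`𝒪`-operator defect of `T₁`. It vanishes for every `t`, so over a field of characteristic zero
all of its coefficients vanish.
-/

variable {F L V : Type*} [Field F] [CharZero F]
  [AddCommGroup L] [Module F L] [AddCommGroup V] [Module F V]

-- Evaluation at `0, 1, -1, 2`; characteristic zero makes `2` and `6` invertible.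
theorem coeffs_eq_zero_of_forall_cubic_eq_zero {K M : Type*} [Field K] [CharZero K]
    [AddCommGroup M] [Module K M] {c₀ c₁ c₂ c₃ : M}
    (h : ∀ t : K, c₀ + t • c₁ + t ^ 2 • c₂ + t ^ 3 • c₃ = 0) :
    c₀ = 0 ∧ c₁ = 0 ∧ c₂ = 0 ∧ c₃ = 0 := by
  have h₀ : c₀ = 0 := by simpa using h 0
  have h₂ : (2 : K) • c₂ = 0 := by
    linear_combination (norm := module) h 1 + h (-1) - (2 : K) • h₀
  have h₂ : c₂ = 0 := (smul_eq_zero.mp h₂).resolve_left two_ne_zero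
  have h₃ : (6 : K) • c₃ = 0 := by
    linear_combination (norm := module) h 2 - (2 : K) • h 1 + h₀ - (2 : K) • h₂
  have h₃ : c₃ = 0 := (smul_eq_zero.mp h₃).resolve_left (by norm_num)
  have h₁ : c₁ = 0 := by
    linear_combination (norm := module) h 1 - h₀ - h₂ - h₃
  exact ⟨h₀, h₁, h₂, h₃⟩

section Defect

variable (b : L →ₗ[F] L →ₗ[F] L →ₗ[F] L) (θ : L →ₗ[F] L →ₗ[F] Module.End F V)

def oOpDefect (T : V →ₗ[F] L) (u v w : V) : L :=
  b (T u) (T v) (T w) - T (Dmap θ (T u) (T v) w + θ (T v) (T w) u - θ (T u) (T w) v)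

omit [CharZero F] in
theorem isOOp_iff_oOpDefect_eq_zero (T : V →ₗ[F] L) :
    IsOOp b θ T ↔ ∀ u v w, oOpDefect b θ T u v w = 0 := by
  simp only [IsOOp, oOpDefect, sub_eq_zero]

def oOpCocycleDefect (T T₁ : V →ₗ[F] L) (u v w : V) : L :=
  b (T u) (T v) (T₁ w) + b (T u) (T₁ v) (T w) + b (T₁ u) (T v) (T w)
    - (T (Dmap θ (T u) (T₁ v) w + Dmap θ (T₁ u) (T v) w
        + θ (T v) (T₁ w) u + θ (T₁ v) (T w) u
        - θ (T u) (T₁ w) v - θ (T₁ u) (T w) v)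
      + T₁ (Dmap θ (T u) (T v) w + θ (T v) (T w) u - θ (T u) (T w) v))

omit [CharZero F] in
theorem oOpDefect_add_smul (T T₁ : V →ₗ[F] L) (t : F) (u v w : V) :
    oOpDefect b θ (T + t • T₁) u v w
      = oOpDefect b θ T u v w + t • oOpCocycleDefect b θ T T₁ u v w
        + t ^ 2 • oOpCocycleDefect b θ T₁ T u v w + t ^ 3 • oOpDefect b θ T₁ u v w := by
  simp only [oOpDefect, oOpCocycleDefect, Dmap, LinearMap.add_apply, LinearMap.smul_apply,
    LinearMap.sub_apply, map_add, map_sub, map_smul]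
  module

end Defect

theorem infinitesimal_deformation_cocycle_and_oOp_general
    (b : L →ₗ[F] L →ₗ[F] L →ₗ[F] L)
    (θ : L →ₗ[F] L →ₗ[F] Module.End F V)
    (T T₁ : V →ₗ[F] L)
    (hdef : ∀ t : F, IsOOp b θ (T + t • T₁)) :
    (∀ u v w,
      b (T u) (T v) (T₁ w) + b (T u) (T₁ v) (T w) + b (T₁ u) (T v) (T w)
        = T (Dmap θ (T u) (T₁ v) w + Dmap θ (T₁ u) (T v) w
            + θ (T v) (T₁ w) u + θ (T₁ v) (T w) u
            - θ (T u) (T₁ w) v - θ (T₁ u) (T w) v)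
          + T₁ (Dmap θ (T u) (T v) w + θ (T v) (T w) u - θ (T u) (T w) v)) ∧
    IsOOp b θ T₁ := by
  have hcoeffs (u v w : V) := coeffs_eq_zero_of_forall_cubic_eq_zero fun t ↦
    (oOpDefect_add_smul b θ T T₁ t u v w).symm.trans
      ((isOOp_iff_oOpDefect_eq_zero b θ _).mp (hdef t) u v w)
  refine ⟨fun u v w ↦ sub_eq_zero.mp (hcoeffs u v w).2.1, ?_⟩
  exact (isOOp_iff_oOpDefect_eq_zero b θ T₁).mpr fun u v w ↦ (hcoeffs u v w).2.2.2

/-- if `T_t = T + t T₁` is an `𝒪`-operator for every scalar `t`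
(an infinitesimal deformation of the `𝒪`-operator `T`), then (1) `T₁` is a `1`-cocycle
in the cohomology of `T`, and (2) `T₁` is itself an `𝒪`-operator. -/
theorem infinitesimal_deformation_cocycle_and_oOp
    (b : L →ₗ[F] L →ₗ[F] L →ₗ[F] L) (hb : IsLTS b)
    (θ : L →ₗ[F] L →ₗ[F] Module.End F V) (hθ : IsLTSRep b θ)
    (T T₁ : V →ₗ[F] L) (hT : IsOOp b θ T)
    (hdef : ∀ t : F, IsOOp b θ (T + t • T₁)) :
    (∀ u v w,
      b (T u) (T v) (T₁ w) + b (T u) (T₁ v) (T w) + b (T₁ u) (T v) (T w)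
        = T (Dmap θ (T u) (T₁ v) w + Dmap θ (T₁ u) (T v) w
            + θ (T v) (T₁ w) u + θ (T₁ v) (T w) u
            - θ (T u) (T₁ w) v - θ (T₁ u) (T w) v)
          + T₁ (Dmap θ (T u) (T v) w + θ (T v) (T w) u - θ (T u) (T w) v)) ∧
    IsOOp b θ T₁ :=
  infinitesimal_deformation_cocycle_and_oOp_general b θ T T₁ hdef
end

section
/- Let T_t = T + tT₁ and T'_t = T + tT'₁ be two equivalent infinitesimal deformations of an O-operator T on a Lie triple system (L,[·,·,·];θ) with representation (V,θ), where equivalence is witnessed by 𝔛 = (x₁,x₂) ∈ L ∧ L such that (φ_t, ψ_t) with φ_t(x) = x + t[x₁,x₂,x] and ψ_t(u) = u + tD(x₁,x₂)u is a morphism of O-operators from T_t to T'_t for all t. Then T₁ and T'₁ differ by the coboundary of 𝔛: for all u ∈ V, T₁(u) − T'₁(u) = T(D(x₁,x₂)u) − [x₁,x₂,Tu]; in particular T₁ and T'₁ define the same cohomology class. -/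
variable {F L V : Type*} [Field F] [CharZero F]
  [AddCommGroup L] [Module F L] [AddCommGroup V] [Module F V]

theorem eq_of_forall_smul_add_sq_smul_eq {K M : Type*} [Field K] [NeZero (2 : K)]
    [AddCommGroup M] [Module K M] {a a' c c' : M}
    (h : ∀ t : K, t • a + t ^ 2 • c = t • a' + t ^ 2 • c') : a = a' := by
  have hdouble : (2 : K) • a = (2 : K) • a' := by
    linear_combination (norm := module) h 1 - h (-1)
  exact smul_right_injective M two_ne_zero hdouble

theorem equivalent_infinitesimal_deformations_cohomologous_general
    (b : L →ₗ[F] L →ₗ[F] L →ₗ[F] L)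
    (θ : L →ₗ[F] L →ₗ[F] Module.End F V)
    (T T₁ T'₁ : V →ₗ[F] L)
    (x₁ x₂ : L)
    -- `φ_t ∘ T_t = T'_t ∘ ψ_t`:
    (hmor2 : ∀ t : F, ∀ u : V,
      (T u + t • T₁ u) + t • b x₁ x₂ (T u + t • T₁ u)
        = T (u + t • Dmap θ x₁ x₂ u) + t • T'₁ (u + t • Dmap θ x₁ x₂ u)) :
    ∀ u : V, T₁ u - T'₁ u = T (Dmap θ x₁ x₂ u) - b x₁ x₂ (T u) := by
  intro u
  rw [sub_eq_sub_iff_add_eq_add]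
  refine eq_of_forall_smul_add_sq_smul_eq (K := F) (c := b x₁ x₂ (T₁ u))
    (c' := T'₁ (Dmap θ x₁ x₂ u)) fun t => ?_
  have h := hmor2 t u
  simp only [map_add, map_smul] at h
  linear_combination (norm := module) h

/-- if the infinitesimal deformations `T_t = T + tT₁` and `T'_t = T + tT'₁`
of the `𝒪`-operator `T` are equivalent, with equivalence witnessed by `𝔛 = (x₁,x₂)` via
`φ_t(x) = x + t[x₁,x₂,x]`, `ψ_t(u) = u + tD(x₁,x₂)u`, then `T₁ − T'₁ = ∂_T(𝔛)`, i.e.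
`T₁(u) − T'₁(u) = T(D(x₁,x₂)u) − [x₁,x₂,Tu]`; in particular `T₁` and `T'₁` define the
same cohomology class. -/
theorem equivalent_infinitesimal_deformations_cohomologous
    (b : L →ₗ[F] L →ₗ[F] L →ₗ[F] L) (hb : IsLTS b)
    (θ : L →ₗ[F] L →ₗ[F] Module.End F V) (hθ : IsLTSRep b θ)
    (T T₁ T'₁ : V →ₗ[F] L) (hT : IsOOp b θ T)
    (hdef : ∀ t : F, IsOOp b θ (T + t • T₁))
    (hdef' : ∀ t : F, IsOOp b θ (T + t • T'₁))
    (x₁ x₂ : L)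
    -- `φ_t` is a morphism of Lie triple systems:
    (hmor1 : ∀ t : F, ∀ x y z,
      b x y z + t • b x₁ x₂ (b x y z)
        = b (x + t • b x₁ x₂ x) (y + t • b x₁ x₂ y) (z + t • b x₁ x₂ z))
    -- `φ_t ∘ T_t = T'_t ∘ ψ_t`:
    (hmor2 : ∀ t : F, ∀ u : V,
      (T u + t • T₁ u) + t • b x₁ x₂ (T u + t • T₁ u)
        = T (u + t • Dmap θ x₁ x₂ u) + t • T'₁ (u + t • Dmap θ x₁ x₂ u))
    -- `ψ_t ∘ θ(x,y) = θ(φ_t x, φ_t y) ∘ ψ_t`: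
    (hmor3 : ∀ t : F, ∀ (x y : L) (u : V),
      θ x y u + t • Dmap θ x₁ x₂ (θ x y u)
        = θ (x + t • b x₁ x₂ x) (y + t • b x₁ x₂ y) (u + t • Dmap θ x₁ x₂ u)) :
    ∀ u : V, T₁ u - T'₁ u = T (Dmap θ x₁ x₂ u) - b x₁ x₂ (T u) :=
  equivalent_infinitesimal_deformations_cohomologous_general b θ T T₁ T'₁ x₁ x₂ hmor2
end
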